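/- One unit cell of MBQC with arbitrary measurement outcomes produces the byproduct operators T Z_i T†: for every N-qubit unitary T, every vector |ψ⟩ ∈ (ℂ²)^{⊗N}, and every outcome string m : Fin N → {0,1}, (√2)^N · ((⊗_{i=1}^{N} ⟨+| Z^{m_i}) ⊗ 1) · U_T · (|ψ⟩ ⊗ |+⟩^{⊗N}) = ( ∏_{i=1}^{N} (T Z_i T†)^{m_i} ) · T |ψ⟩, where (⊗_i ⟨+| Z^{m_i}) ⊗ 1 : (ℂ²)^{⊗N} ⊗ (ℂ²)^{⊗N} → (ℂ²)^{⊗N} contracts the input register with the product bra ⊗_i (⟨+| Z^{m_i}). -/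

import Mathlib

/-!
The CZ layer turns `|ψ⟩ ⊗ |+⟩^{⊗N}` into `∑_s ψ(s) |s⟩ ⊗ H^{⊗N}|s⟩`, since its amplitude at
`(s, t)` is `ψ(s) (-1)^{s·t} / √2^N`, an entry of `H^{⊗N}`. The Hadamard layer on the output
undoes `H^{⊗N}`, so `U_T (|ψ⟩ ⊗ |+⟩^{⊗N}) = ∑_s ψ(s) |s⟩ ⊗ T|s⟩`. Contracting the input with
`⊗_i ⟨+|Z^{m_i}` weights `|s⟩` by `(-1)^{m·s} / √2^N`, which leaves `T Z^m |ψ⟩`; and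
`T Z^m |ψ⟩ = (T Z^m T†) T|ψ⟩ = ∏_i (T Z_i T†)^{m_i} T|ψ⟩` since conjugation by `T` is
multiplicative.
-/

open Matrix Complex
open scoped Kronecker Classical

noncomputable section

namespace QCA

/-- Computational-basis index set of an `N`-qubit register. -/
abbrev QIdx (N : ℕ) := Fin N → Fin 2

/-- Operators (matrices) on an `N`-qubit register `(ℂ²)^{⊗N}`. -/
abbrev MatQ (N : ℕ) := Matrix (QIdx N) (QIdx N) ℂ

/-- Pauli X. -/
def Xg : Matrix (Fin 2) (Fin 2) ℂ := !![0, 1; 1, 0]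

/-- Pauli Z. -/
def Zg : Matrix (Fin 2) (Fin 2) ℂ := !![1, 0; 0, -1]

/-- Pauli Y = i·X·Z. -/
def Yg : Matrix (Fin 2) (Fin 2) ℂ := Complex.I • (Xg * Zg)

/-- Hadamard gate. -/
def Hg : Matrix (Fin 2) (Fin 2) ℂ := (Real.sqrt 2 : ℂ)⁻¹ • !![1, 1; 1, -1]

/-- Phase gate S = diag(1, i). -/
def Sg : Matrix (Fin 2) (Fin 2) ℂ := !![1, 0; 0, Complex.I]

/-- √X := H·S·H. -/
def sqrtXg : Matrix (Fin 2) (Fin 2) ℂ := Hg * Sg * Hg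

/-- The ket |+⟩ = (|0⟩+|1⟩)/√2. -/
def ketPlus : Fin 2 → ℂ := fun _ => (Real.sqrt 2 : ℂ)⁻¹

/-- The bra ⟨+|. -/
def braPlus : Fin 2 → ℂ := fun a => star (ketPlus a)

/-- The product state |+⟩^{⊗ι}. -/
def ketPlusAll (ι : Type*) [Fintype ι] : (ι → Fin 2) → ℂ := fun s => ∏ i, ketPlus (s i)

/-- Kronecker product of two vectors. -/
def kronVec {a b : Type*} (v : a → ℂ) (w : b → ℂ) : a × b → ℂ := fun p => v p.1 * w p.2

variable {ι : Type*} [Fintype ι] [DecidableEq ι]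

/-- `op1 P i` acts as the one-qubit operator `P` on qubit `i` and as the identity elsewhere. -/
def op1 (P : Matrix (Fin 2) (Fin 2) ℂ) (i : ι) : Matrix (ι → Fin 2) (ι → Fin 2) ℂ :=
  fun s t => P (s i) (t i) * ∏ j ∈ Finset.univ.erase i, (if s j = t j then (1 : ℂ) else 0)

/-- Controlled-Z gate between qubits `i` and `j` (identity elsewhere). -/
def cz2 (i j : ι) : Matrix (ι → Fin 2) (ι → Fin 2) ℂ :=
  Matrix.diagonal fun s => if s i = 1 ∧ s j = 1 then (-1 : ℂ) else 1

/-- The Z-rotation exp(iθ Z_i) on qubit `i`. -/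
def rotZ (θ : ℝ) (i : ι) : Matrix (ι → Fin 2) (ι → Fin 2) ℂ :=
  NormedSpace.exp (((θ : ℂ) * Complex.I) • op1 Zg i)

/-- The layer ∏_{i=1}^{N} H_i of Hadamards on every site of a ring of `N` qubits. -/
def hadamardLayer (N : ℕ) : MatQ N := (List.ofFn fun i : Fin N => op1 Hg i).prod

/-- The layer ∏_{i=1}^{N} CZ_{i,i+1} of controlled-Z gates on a ring of `N` qubits
(site indices mod `N`; the factors pairwise commute). -/
def czRing (N : ℕ) [NeZero N] : MatQ N := (List.ofFn fun i : Fin N => cz2 i (i + 1)).prod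

/-- The layer ∏_{i=1}^{N} (√X)_i on a ring of `N` qubits. -/
def sqrtXLayer (N : ℕ) : MatQ N := (List.ofFn fun i : Fin N => op1 sqrtXg i).prod

/-- The cluster CQCA T_c = (∏ H_i)·(∏ CZ_{i,i+1}) on a ring of `N` qubits. -/
def Tc (N : ℕ) [NeZero N] : MatQ N := hadamardLayer N * czRing N

/-- The periodic CQCA T̃_c = ∏ CZ_{i,i+1} on a ring of `N` qubits. -/
def Ttc (N : ℕ) [NeZero N] : MatQ N := czRing N

/-- The fractal CQCA T̂_c = (∏ H_i)·(∏ CZ_{i,i+1})·(∏ (√X)_i) on a ring of `N` qubits. -/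
def Thc (N : ℕ) [NeZero N] : MatQ N := hadamardLayer N * czRing N * sqrtXLayer N

/-- Controlled-Z between input qubit `i` and output qubit `i` on a doubled register. -/
def czIO {N : ℕ} (i : Fin N) : Matrix (QIdx N × QIdx N) (QIdx N × QIdx N) ℂ :=
  Matrix.diagonal fun p => if p.1 i = 1 ∧ p.2 i = 1 then (-1 : ℂ) else 1

/-- The unitary U_T = (1 ⊗ T)·(∏_i H_i^{(out)})·(∏_i CZ_{i,i}^{(in,out)}) of Eq. (16). -/
def UT {N : ℕ} (T : MatQ N) : Matrix (QIdx N × QIdx N) (QIdx N × QIdx N) ℂ :=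
  ((1 : MatQ N) ⊗ₖ T) *
    (List.ofFn fun i : Fin N => (1 : MatQ N) ⊗ₖ op1 Hg i).prod *
    (List.ofFn fun i : Fin N => czIO i).prod

/-- Contraction of the input register with the product bra `⊗_i bra i`. -/
def contractIn {N : ℕ} (bra : Fin N → Fin 2 → ℂ) (v : QIdx N × QIdx N → ℂ) : QIdx N → ℂ :=
  fun t => ∑ s : QIdx N, (∏ i, bra i (s i)) * v (s, t)

lemma diagonal_commute {α : Type*} [Fintype α] [DecidableEq α] (d e : α → ℂ) :
    Commute (Matrix.diagonal d) (Matrix.diagonal e) := by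
  unfold Commute SemiconjBy
  have h : (fun i => d i * e i) = fun i => e i * d i := by funext x; ring
  rw [Matrix.diagonal_mul_diagonal, Matrix.diagonal_mul_diagonal, h]

lemma Zg_eq_diagonal : Zg = Matrix.diagonal ![1, -1] := by
  ext i j
  fin_cases i <;> fin_cases j <;> simp [Zg, Matrix.diagonal]

lemma op1_diagonal (d : Fin 2 → ℂ) (i : ι) :
    op1 (Matrix.diagonal d) i = Matrix.diagonal (fun s => d (s i)) := by
  ext s t
  by_cases h : s = t
  · subst h
    simp [op1, Matrix.diagonal_apply_eq]
  · rw [Matrix.diagonal_apply_ne _ h]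
    by_cases hi : s i = t i
    · obtain ⟨k, hk⟩ : ∃ k, s k ≠ t k := Function.ne_iff.mp h
      have hki : k ≠ i := by rintro rfl; exact hk hi
      have h0 : (if s k = t k then (1 : ℂ) else 0) = 0 := by simp [hk]
      unfold op1
      rw [Finset.prod_eq_zero (Finset.mem_erase.mpr ⟨hki, Finset.mem_univ k⟩) h0]
      ring
    · unfold op1
      rw [Matrix.diagonal_apply_ne _ hi]
      ring

/-- The controlled-Z gate attached to an (undirected) edge `e`. -/
def czEdge {N : ℕ} (e : Sym2 (Fin N)) : MatQ N :=
  Matrix.diagonal fun s => if ∀ i ∈ e, s i = 1 then (-1 : ℂ) else 1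

/-- The unitary ∏_{{i,j} ∈ E(G)} CZ_{i,j} preparing the graph state (the
factors pairwise commute, so the product over the edge set is well defined). -/
def graphUnitary {N : ℕ} (G : SimpleGraph (Fin N)) [DecidableRel G.Adj] : MatQ N :=
  G.edgeFinset.noncommProd czEdge (by intro a _ b _ _; exact diagonal_commute _ _)

/-- The graph state |G⟩ = (∏_{{i,j} ∈ E(G)} CZ_{i,j}) |+⟩^{⊗N}. -/
def graphState {N : ℕ} (G : SimpleGraph (Fin N)) [DecidableRel G.Adj] : QIdx N → ℂ :=
  (graphUnitary G).mulVec (ketPlusAll (Fin N))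

/-- The stabilizer generator K_v = X_v · ∏_{w ∈ N_G(v)} Z_w of the graph state
(the Z factors pairwise commute, so the product is well defined). -/
def stabGen {N : ℕ} (G : SimpleGraph (Fin N)) [DecidableRel G.Adj] (v : Fin N) : MatQ N :=
  op1 Xg v *
    (G.neighborFinset v).noncommProd (fun w => op1 Zg w)
      (by
        intro a _ b _ _
        simp only [Function.onFun]
        rw [Zg_eq_diagonal, op1_diagonal, op1_diagonal]
        exact diagonal_commute _ _)

section PiKronecker

variable {ι κ R : Type*} [Fintype ι] [CommSemiring R]

def piKronecker (P : ι → Matrix κ κ R) : Matrix (ι → κ) (ι → κ) R :=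
  fun s t => ∏ i, P i (s i) (t i)

lemma piKronecker_one [DecidableEq κ] : piKronecker (1 : ι → Matrix κ κ R) = 1 := by
  ext s t
  by_cases h : s = t
  · subst h
    simp [piKronecker]
  · obtain ⟨k, hk⟩ := Function.ne_iff.mp h
    rw [Matrix.one_apply_ne h]
    exact Finset.prod_eq_zero (Finset.mem_univ k) (by simp [hk])

lemma piKronecker_mul [DecidableEq ι] [Fintype κ] (P Q : ι → Matrix κ κ R) :
    piKronecker P * piKronecker Q = piKronecker (P * Q) := by
  ext s t
  simp only [Matrix.mul_apply, piKronecker, Pi.mul_apply, ← Finset.prod_mul_distrib]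
  rw [Finset.prod_univ_sum, Fintype.piFinset_univ]

def piKroneckerHom [DecidableEq ι] [Fintype κ] [DecidableEq κ] :
    (ι → Matrix κ κ R) →* Matrix (ι → κ) (ι → κ) R where
  toFun := piKronecker
  map_one' := piKronecker_one
  map_mul' P Q := (piKronecker_mul P Q).symm

end PiKronecker

lemma List.prod_ofFn_mulSingle {n : ℕ} {M : Fin n → Type*} [∀ i, Monoid (M i)]
    (x : ∀ i, M i) : (List.ofFn fun i => Pi.mulSingle i (x i)).prod = x := by
  conv_rhs => rw [← Finset.noncommProd_mulSingle x]
  simp only [Finset.noncommProd, Fin.univ_val_map, Multiset.noncommProd_coe]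

lemma List.prod_ofFn_diagonal {α R : Type*} [Fintype α] [DecidableEq α] [CommSemiring R]
    {n : ℕ} (d : Fin n → α → R) :
    (List.ofFn fun i => Matrix.diagonal (d i)).prod = Matrix.diagonal fun a => ∏ i, d i a := by
  have h := map_list_prod (Matrix.diagonalRingHom α R) (List.ofFn d)
  rw [List.map_ofFn, List.prod_ofFn] at h
  simpa [Function.comp_def, Finset.prod_fn] using h.symm

lemma List.prod_map_one_kronecker {m n R : Type*} [Fintype m] [DecidableEq m] [Fintype n]
    [DecidableEq n] [CommSemiring R] (l : List (Matrix n n R)) :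
    (l.map fun A => (1 : Matrix m m R) ⊗ₖ A).prod = 1 ⊗ₖ l.prod := by
  induction l with
  | nil => simp
  | cons A l ih => rw [List.map_cons, List.prod_cons, ih, ← Matrix.mul_kronecker_mul, one_mul,
      List.prod_cons]

lemma op1_eq_piKronecker (P : Matrix (Fin 2) (Fin 2) ℂ) (i : ι) :
    op1 P i = piKronecker (Pi.mulSingle i P) := by
  ext s t
  rw [op1, piKronecker, ← Finset.mul_prod_erase Finset.univ
    (fun j => (Pi.mulSingle i P : ι → Matrix (Fin 2) (Fin 2) ℂ) j (s j) (t j))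
    (Finset.mem_univ i), Pi.mulSingle_eq_same]
  congr 1
  refine Finset.prod_congr rfl fun j hj => ?_
  rw [Pi.mulSingle_eq_of_ne (Finset.ne_of_mem_erase hj), Matrix.one_apply]

lemma List.prod_ofFn_op1 {N : ℕ} (P : Fin N → Matrix (Fin 2) (Fin 2) ℂ) :
    (List.ofFn fun i => op1 (P i) i).prod = piKronecker P := by
  calc (List.ofFn fun i => op1 (P i) i).prod
      = ((List.ofFn fun i => Pi.mulSingle i (P i)).map piKroneckerHom).prod := by
        simp [List.map_ofFn, Function.comp_def, op1_eq_piKronecker, piKroneckerHom]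
    _ = piKronecker P := by rw [← map_list_prod, List.prod_ofFn_mulSingle]; rfl

lemma Hg_apply (a b : Fin 2) :
    Hg a b = (Real.sqrt 2 : ℂ)⁻¹ * (if a = 1 ∧ b = 1 then -1 else 1) := by
  fin_cases a <;> fin_cases b <;> simp [Hg]

lemma Hg_mul_self : Hg * Hg = 1 := by
  have h2 : (Real.sqrt 2 : ℂ) ^ 2 = 2 := by norm_cast; simp
  ext a b
  fin_cases a <;> fin_cases b <;>
    norm_num [Hg, Matrix.mul_apply, Fin.sum_univ_two, ← mul_inv, ← pow_two, h2]

/-- The eigenvalue `(-1)^{m · s}` of the Pauli string `∏_i Z_i^{m_i}` on the basis state `s`. -/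
def zSign {N : ℕ} (m : Fin N → Fin 2) (s : QIdx N) : ℂ := ∏ i, ![1, -1] (s i) ^ (m i : ℕ)

lemma List.prod_ofFn_op1_Zg_pow {N : ℕ} (m : Fin N → Fin 2) :
    (List.ofFn fun i => op1 Zg i ^ (m i : ℕ)).prod = diagonal (zSign m) := by
  simp_rw [Zg_eq_diagonal, op1_diagonal, diagonal_pow]
  exact List.prod_ofFn_diagonal _

lemma List.prod_ofFn_conj_op1_Zg_pow {N : ℕ} {T : MatQ N}
    (hT : T ∈ Matrix.unitaryGroup (QIdx N) ℂ) (m : Fin N → Fin 2) :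
    (List.ofFn fun i => (T * op1 Zg i * Tᴴ) ^ (m i : ℕ)).prod = T * diagonal (zSign m) * Tᴴ := by
  let conjT := Unitary.conjStarAlgAut ℂ (MatQ N) ⟨T, hT⟩
  have hconj (A : MatQ N) : T * A * Tᴴ = conjT A := rfl
  simp_rw [hconj, ← map_pow]
  rw [← List.prod_ofFn_op1_Zg_pow, map_list_prod, List.map_ofFn]
  rfl

/-- `fun p => ψ p.1 * B p.2 p.1` is the state `∑_s ψ(s) |s⟩ ⊗ B|s⟩`. -/
lemma one_kronecker_mulVec_columns {m n R : Type*} [Fintype m] [DecidableEq m] [Fintype n]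
    [CommSemiring R] (A : Matrix n n R) (B : Matrix n m R) (ψ : m → R) :
    ((1 : Matrix m m R) ⊗ₖ A) *ᵥ (fun p => ψ p.1 * B p.2 p.1) =
      fun p => ψ p.1 * (A * B) p.2 p.1 := by
  funext ⟨s, t⟩
  simp only [mulVec, dotProduct, kroneckerMap_apply, one_apply, ite_mul, one_mul, zero_mul,
    Fintype.sum_prod_type, Finset.sum_ite_irrel, Finset.sum_const_zero, Finset.sum_ite_eq,
    Finset.mem_univ, if_true, mul_apply, Finset.mul_sum]
  exact Finset.sum_congr rfl fun u _ => by ring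

lemma czIO_layer_mulVec {N : ℕ} (ψ : QIdx N → ℂ) :
    (List.ofFn fun i : Fin N => czIO i).prod *ᵥ kronVec ψ (ketPlusAll (Fin N)) =
      fun p => ψ p.1 * piKronecker (fun _ => Hg) p.2 p.1 := by
  simp only [czIO]
  rw [List.prod_ofFn_diagonal]
  funext p
  simp only [mulVec_diagonal, kronVec, ketPlusAll, ketPlus, piKronecker, Hg_apply,
    Finset.prod_mul_distrib, and_comm]
  ring

lemma UT_mulVec_kronVec_ketPlusAll {N : ℕ} (T : MatQ N) (ψ : QIdx N → ℂ) :
    UT T *ᵥ kronVec ψ (ketPlusAll (Fin N)) = fun p => ψ p.1 * T p.2 p.1 := by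
  have hH : (List.ofFn fun i : Fin N => (1 : MatQ N) ⊗ₖ op1 Hg i).prod =
      1 ⊗ₖ piKronecker fun _ => Hg := by
    rw [← List.prod_ofFn_op1, ← List.prod_map_one_kronecker, List.map_ofFn]
    rfl
  have hHH : piKronecker (fun _ : Fin N => Hg) * piKronecker (fun _ => Hg) = 1 := by
    rw [piKronecker_mul, ← piKronecker_one]
    exact congrArg piKronecker (funext fun _ => Hg_mul_self)
  rw [UT, hH, ← mulVec_mulVec, ← mulVec_mulVec, czIO_layer_mulVec,
    one_kronecker_mulVec_columns, one_kronecker_mulVec_columns, hHH, mul_one]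

lemma contractIn_columns {N : ℕ} (bra : Fin N → Fin 2 → ℂ) (T : MatQ N) (ψ : QIdx N → ℂ) :
    contractIn bra (fun p => ψ p.1 * T p.2 p.1) = T *ᵥ fun s => (∏ i, bra i (s i)) * ψ s := by
  funext t
  exact Finset.sum_congr rfl fun s _ => by ring

lemma prod_vecMul_braPlus_Zg_pow {N : ℕ} (m : Fin N → Fin 2) (s : QIdx N) :
    ∏ i, vecMul braPlus (Zg ^ (m i : ℕ)) (s i) = (Real.sqrt 2 : ℂ)⁻¹ ^ N * zSign m s := by
  have hbra : braPlus = fun _ => (Real.sqrt 2 : ℂ)⁻¹ := by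
    funext a
    simp [braPlus, ketPlus, ← Complex.ofReal_inv, Complex.conj_ofReal]
  simp only [Zg_eq_diagonal, diagonal_pow, vecMul_diagonal, hbra, zSign, Pi.pow_apply,
    Finset.prod_mul_distrib, Finset.prod_const, Finset.card_univ, Fintype.card_fin]

/-- one unit cell of MBQC with outcomes `m` produces the byproducts
`T Z_i T†`: `(√2)^N ((⊗_i ⟨+|Z^{m_i}) ⊗ 1) U_T (|ψ⟩ ⊗ |+⟩^{⊗N}) = (∏_i (TZ_iT†)^{m_i}) T|ψ⟩`. -/
theorem mbqc_unit_cell_byproducts {N : ℕ} (T : MatQ N)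
    (hT : T ∈ Matrix.unitaryGroup (QIdx N) ℂ) (ψ : QIdx N → ℂ) (m : Fin N → Fin 2) :
    ((Real.sqrt 2 : ℂ) ^ N) •
        contractIn (fun i => Matrix.vecMul braPlus (Zg ^ (m i : ℕ)))
          ((UT T).mulVec (kronVec ψ (ketPlusAll (Fin N)))) =
      ((List.ofFn fun i : Fin N => (T * op1 Zg i * Tᴴ) ^ (m i : ℕ)).prod).mulVec
        (T.mulVec ψ) := by
  have hTT : Tᴴ * T = 1 := mem_unitaryGroup_iff'.mp hT
  have hsqrt2 : (Real.sqrt 2 : ℂ) ^ N * (Real.sqrt 2 : ℂ)⁻¹ ^ N = 1 := by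
    rw [← mul_pow, mul_inv_cancel₀ (by simp), one_pow]
  have hbras : (fun s => (∏ i, vecMul braPlus (Zg ^ (m i : ℕ)) (s i)) * ψ s) =
      (Real.sqrt 2 : ℂ)⁻¹ ^ N • (diagonal (zSign m) *ᵥ ψ) := by
    funext s
    simp only [prod_vecMul_braPlus_Zg_pow, Pi.smul_apply, mulVec_diagonal, smul_eq_mul, mul_assoc]
  rw [UT_mulVec_kronVec_ketPlusAll, contractIn_columns, hbras, mulVec_smul, smul_smul, hsqrt2,
    one_smul, List.prod_ofFn_conj_op1_Zg_pow hT, mulVec_mulVec, mulVec_mulVec,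
    Matrix.mul_assoc _ Tᴴ, hTT, mul_one]

end QCA

end
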